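/- arXiv:1112.1805 — 2 statements merged into one kernel-verified Lean document; each statement's English description precedes it below -/
import Mathlib

section
/- The function b defined by b(x) = sin((π/2)v(|x|−1)) for 1 ≤ |x| ≤ 2, b(x) = cos((π/2)v(|x|/2−1)) for 2 < |x| ≤ 4, and b(x) = 0 otherwise, satisfies b(x)^2 + b(2x)^2 + b(4x)^2 ≤ 1 for all x, with equality b(x)^2 + b(2x)^2 = 1 for 1 ≤ |x| ≤ 2. -/
/-! On `1 ≤ |x| ≤ 2` the dilates `b x` and `b (2x)` are the sine and the cosine of the same angle
`π/2 · v(|x| - 1)`, so their squares add up to `1`. Moreover `b` vanishes for `|x| ≤ 1` and for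
`|x| ≥ 4` (at the endpoints because `v 0 = 0` and `v 1 = 1`), so among `x, 2x, 4x` at most two
consecutive dilates lie in the support, and when two do, they form such a sine–cosine pair. -/

noncomputable def meyerV (x : ℝ) : ℝ :=
  if x < 0 then 0
  else if x ≤ 1 then 35*x^4 - 84*x^5 + 70*x^6 - 20*x^7
  else 1

noncomputable def meyerB (x : ℝ) : ℝ :=
  if 1 ≤ |x| ∧ |x| ≤ 2 then Real.sin (Real.pi / 2 * meyerV (|x| - 1))
  else if 2 < |x| ∧ |x| ≤ 4 then Real.cos (Real.pi / 2 * meyerV (|x| / 2 - 1))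
  else 0

open Real

lemma meyerV_of_nonpos {x : ℝ} (hx : x ≤ 0) : meyerV x = 0 := by
  rcases hx.lt_or_eq with hx | rfl <;> simp [meyerV, hx]

lemma meyerV_of_one_le {x : ℝ} (hx : 1 ≤ x) : meyerV x = 1 := by
  rcases hx.lt_or_eq with hx | rfl
  · simp [meyerV, not_lt.2 (zero_le_one.trans hx.le), not_le.2 hx]
  · norm_num [meyerV]

lemma meyerB_sq_le_one (x : ℝ) : meyerB x ^ 2 ≤ 1 := by
  unfold meyerB
  split_ifs
  · exact sin_sq_le_one _
  · exact cos_sq_le_one _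
  · norm_num

lemma meyerB_eq_zero_of_abs_le_one {x : ℝ} (hx : |x| ≤ 1) : meyerB x = 0 := by
  unfold meyerB
  split_ifs with h₁ h₂
  · rw [meyerV_of_nonpos (by linarith), mul_zero, sin_zero]
  · linarith [h₂.1]
  · rfl

lemma meyerB_eq_zero_of_four_le_abs {x : ℝ} (hx : 4 ≤ |x|) : meyerB x = 0 := by
  unfold meyerB
  split_ifs with h₁ h₂
  · linarith [h₁.2]
  · rw [meyerV_of_one_le (by linarith), mul_one, cos_pi_div_two]
  · rfl

section SinCosPair

variable {x : ℝ} (h₁ : 1 ≤ |x|) (h₂ : |x| ≤ 2)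
include h₁ h₂

lemma meyerB_eq_sin : meyerB x = sin (π / 2 * meyerV (|x| - 1)) :=
  if_pos ⟨h₁, h₂⟩

lemma meyerB_two_mul_eq_cos : meyerB (2 * x) = cos (π / 2 * meyerV (|x| - 1)) := by
  have habs : |2 * x| = 2 * |x| := by rw [abs_mul, abs_two]
  rcases h₁.lt_or_eq with h₁ | h₁
  · have hmem : 2 < |2 * x| ∧ |2 * x| ≤ 4 := by constructor <;> linarith
    rw [meyerB, if_neg fun h ↦ hmem.1.not_ge h.2, if_pos hmem, habs, mul_div_cancel_left₀ _ two_ne_zero]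
  · -- at `|x| = 1` the point `2x` falls in the sine branch, where `sin (π/2) = 1 = cos 0`
    have h2x : |2 * x| = 2 := by rw [habs, ← h₁, mul_one]
    rw [meyerB, if_pos ⟨by rw [h2x]; norm_num, h2x.le⟩, h2x, ← h₁, sub_self,
      meyerV_of_nonpos le_rfl, meyerV_of_one_le (by norm_num)]
    norm_num

lemma meyerB_sq_add_meyerB_two_mul_sq : meyerB x ^ 2 + meyerB (2 * x) ^ 2 = 1 := by
  rw [meyerB_eq_sin h₁ h₂, meyerB_two_mul_eq_cos h₁ h₂, sin_sq_add_cos_sq]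

end SinCosPair

theorem meyerB_partition :
    (∀ x : ℝ, meyerB x ^ 2 + meyerB (2*x) ^ 2 + meyerB (4*x) ^ 2 ≤ 1) ∧
    (∀ x : ℝ, 1 ≤ |x| → |x| ≤ 2 → meyerB x ^ 2 + meyerB (2*x) ^ 2 = 1) := by
  refine ⟨fun x ↦ ?_, fun x ↦ meyerB_sq_add_meyerB_two_mul_sq⟩
  have h2x : |2 * x| = 2 * |x| := by rw [abs_mul, abs_two]
  have h4x : |4 * x| = 4 * |x| := by rw [abs_mul, abs_of_pos four_pos]
  rcases le_total |x| (1 / 2) with hx | hx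
  · rw [meyerB_eq_zero_of_abs_le_one (by linarith),
      meyerB_eq_zero_of_abs_le_one (by linarith)]
    linarith [meyerB_sq_le_one (4 * x)]
  rcases le_total |x| 1 with hx' | hx'
  · have hpair := meyerB_sq_add_meyerB_two_mul_sq (x := 2 * x) (by linarith) (by linarith)
    rw [← mul_assoc, show (2 : ℝ) * 2 = 4 by norm_num] at hpair
    rw [meyerB_eq_zero_of_abs_le_one hx']
    linarith
  rcases le_total |x| 2 with hx'' | hx''
  · rw [meyerB_sq_add_meyerB_two_mul_sq hx' hx'', meyerB_eq_zero_of_four_le_abs (by linarith)]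
    norm_num
  · rw [meyerB_eq_zero_of_four_le_abs (x := 2 * x) (by linarith),
      meyerB_eq_zero_of_four_le_abs (x := 4 * x) (by linarith)]
    linarith [meyerB_sq_le_one x]
end

section
/- For ψ̂₁(ω) := sqrt(b(2ω)^2 + b(ω)^2), one has the partition of unity identity: for every ω with |ω| > 1, the sum over j ≥ 0 of |ψ̂₁(2^{-2j} ω)|^2 equals 1. -/
noncomputable def psi1hat (ω : ℝ) : ℝ := Real.sqrt (meyerB (2*ω) ^ 2 + meyerB ω ^ 2)

/-!
Since `|ψ̂₁ t|² = b (2t)² + b t²`, the terms of the series interleave into the dyadic series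
`∑_{m ≥ 0} b (2ω / 2^m)²`. As `b` vanishes for `|y| ≤ 1` and for `|y| > 4`, only the two scales
`2y` and `y` with `1 < |y| ≤ 2` contribute, and there `b (2y)² + b y²` is `cos² + sin²` of the
same angle.
-/

theorem exists_pow_lt_le_pow_succ {a b : ℝ} (ha : 1 < a) (hb : 1 < b) :
    ∃ n : ℕ, b ^ n < a ∧ a ≤ b ^ (n + 1) := by
  obtain ⟨n, hn_lt, hn_le⟩ := exists_mem_Ioc_zpow (zero_lt_one.trans ha) hb
  have hn : 0 ≤ n := by
    by_contra! hn
    linarith [zpow_le_one_of_nonpos₀ hb.le (show n + 1 ≤ 0 by omega)]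
  lift n to ℕ using hn
  exact ⟨n, by exact_mod_cast hn_lt, by exact_mod_cast hn_le⟩

theorem HasSum.even_add_odd_pairs {G : Type*} [AddCommGroup G] [UniformSpace G]
    [IsUniformAddGroup G] [CompleteSpace G] [T2Space G] {f : ℕ → G} {a : G} (hf : HasSum f a) :
    HasSum (fun k ↦ f (2 * k) + f (2 * k + 1)) a := by
  have h_even := hf.summable.comp_injective (mul_right_injective₀ two_ne_zero)
  have h_odd := hf.summable.comp_injective
    ((add_left_injective 1).comp (mul_right_injective₀ two_ne_zero))
  rw [hf.unique (h_even.hasSum.even_add_odd h_odd.hasSum)]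
  exact h_even.hasSum.add h_odd.hasSum

theorem hasSum_comp_div_two_pow {f : ℝ → ℝ} (h_small : ∀ y, |y| ≤ 1 → f y = 0)
    (h_large : ∀ y, 4 < |y| → f y = 0) (h_pair : ∀ y, 1 < |y| → |y| ≤ 2 → f (2 * y) + f y = 1)
    {x : ℝ} (hx : 2 < |x|) : HasSum (fun m : ℕ ↦ f (x / 2 ^ m)) 1 := by
  obtain ⟨n, hn_lt, hn_le⟩ := exists_pow_lt_le_pow_succ (a := |x| / 2) (by linarith) one_lt_two
  have h_lower : 2 ^ (n + 1) < |x| := by rw [pow_succ]; linarith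
  have h_upper : |x| ≤ 2 ^ (n + 2) := by rw [pow_succ]; linarith
  have h_abs (m : ℕ) : |x / 2 ^ m| = |x| / 2 ^ m := by simp [abs_div]
  have h_zero : ∀ m ∉ ({n, n + 1} : Finset ℕ), f (x / 2 ^ m) = 0 := by
    intro m hm
    simp only [Finset.mem_insert, Finset.mem_singleton, not_or] at hm
    rcases lt_or_gt_of_ne hm.1 with hmn | hmn
    · refine h_large _ ?_
      rw [h_abs, lt_div_iff₀ (by positivity)]
      calc 4 * 2 ^ m = (2 : ℝ) ^ (m + 2) := by ring
        _ ≤ 2 ^ (n + 1) := pow_le_pow_right₀ one_le_two (by omega)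
        _ < |x| := h_lower
    · refine h_small _ ?_
      rw [h_abs, div_le_one (by positivity)]
      exact h_upper.trans (pow_le_pow_right₀ one_le_two (by omega))
  have h_scale : x / 2 ^ n = 2 * (x / 2 ^ (n + 1)) := by rw [pow_succ]; field_simp
  have h_one : f (x / 2 ^ n) + f (x / 2 ^ (n + 1)) = 1 := by
    rw [h_scale]
    refine h_pair _ ?_ ?_ <;> rw [h_abs, pow_succ]
    · rw [lt_div_iff₀ (by positivity)]; linarith
    · rw [div_le_iff₀ (by positivity)]
      linarith [show (2 : ℝ) ^ (n + 2) = 2 * (2 ^ n * 2) by ring]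
  simpa [Finset.sum_pair (by omega : n ≠ n + 1), h_one] using hasSum_sum_of_ne_finset_zero h_zero

theorem meyerB_eq_zero_of_abs_le_one_s3 {y : ℝ} (hy : |y| ≤ 1) : meyerB y = 0 := by
  rcases hy.lt_or_eq with hy | hy
  · rw [meyerB, if_neg (by intro h; linarith [h.1]), if_neg (by intro h; linarith [h.1])]
  · simp [meyerB, meyerV, hy]

theorem meyerB_eq_zero_of_four_lt_abs {y : ℝ} (hy : 4 < |y|) : meyerB y = 0 := by
  rw [meyerB, if_neg (by intro h; linarith [h.2]), if_neg (by intro h; linarith [h.2])]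

theorem meyerB_two_mul_sq_add_sq {y : ℝ} (h_lower : 1 < |y|) (h_upper : |y| ≤ 2) :
    meyerB (2 * y) ^ 2 + meyerB y ^ 2 = 1 := by
  have h_abs : |2 * y| = 2 * |y| := by rw [abs_mul, abs_two]
  rw [meyerB, meyerB, h_abs, if_neg (by intro h; linarith [h.2]),
    if_pos ⟨by linarith, by linarith⟩, if_pos ⟨h_lower.le, h_upper⟩,
    show 2 * |y| / 2 - 1 = |y| - 1 by ring]
  exact Real.cos_sq_add_sin_sq _

theorem sq_abs_psi1hat (t : ℝ) : |psi1hat t| ^ 2 = meyerB (2 * t) ^ 2 + meyerB t ^ 2 := by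
  rw [sq_abs, psi1hat, Real.sq_sqrt (by positivity)]

theorem psi1hat_partition_of_unity (ω : ℝ) (hω : 1 < |ω|) :
    ∑' j : ℕ, |psi1hat ((2:ℝ) ^ (-(2 * (j:ℤ))) * ω)| ^ 2 = 1 := by
  have h_scales : HasSum (fun m : ℕ ↦ meyerB (2 * ω / 2 ^ m) ^ 2) 1 :=
    hasSum_comp_div_two_pow (f := fun y ↦ meyerB y ^ 2)
      (fun y hy ↦ by rw [meyerB_eq_zero_of_abs_le_one_s3 hy, zero_pow two_ne_zero])
      (fun y hy ↦ by rw [meyerB_eq_zero_of_four_lt_abs hy, zero_pow two_ne_zero])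
      (fun y ↦ meyerB_two_mul_sq_add_sq) (by rw [abs_mul, abs_two]; linarith)
  have h_term (j : ℕ) : |psi1hat ((2:ℝ) ^ (-(2 * (j:ℤ))) * ω)| ^ 2 =
      meyerB (2 * ω / 2 ^ (2 * j)) ^ 2 + meyerB (2 * ω / 2 ^ (2 * j + 1)) ^ 2 := by
    rw [sq_abs_psi1hat, zpow_neg, show (2 : ℝ) ^ (2 * (j : ℤ)) = 2 ^ (2 * j) by norm_cast,
      pow_succ' (2 : ℝ) (2 * j), mul_div_mul_left _ _ two_ne_zero, inv_mul_eq_div, mul_div_assoc]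
  rw [tsum_congr h_term]
  exact h_scales.even_add_odd_pairs.tsum_eq
end
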